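/- (Descent lemma for dual preconditioned gradient descent) Suppose f : ℝ^d → ℝ ∪ {∞} is convex and essentially smooth, k : ℝ^d → ℝ ∪ {∞} is Legendre convex and uniquely minimized at 0, ∇f(int(dom f)) ⊆ int(dom k), and D_k(∇f(y), ∇f(x)) ≤ L*·D_f(x, y) for all x, y ∈ int(dom f). Let x₀ ∈ int(dom f) and define x_i = x_{i−1} − (1/L*)·∇k(∇f(x_{i−1})). Then every iterate satisfies x_i ∈ int(dom f), and for all x ∈ int(dom f), k(∇f(x_i)) ≤ k(∇f(x)) − D_k(∇f(x), ∇f(x_{i−1})) + L*·D_f(x_{i−1}, x) − L*·D_f(x_i, x). -/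
import Mathlib

open Filter Topology RealInnerProductSpace Classical

noncomputable section

abbrev E (d : ℕ) := EuclideanSpace ℝ (Fin d)

def IsEssentiallySmooth {d : ℕ} (f : E d → ℝ) (S : Set (E d)) (f' : E d → E d) : Prop :=
  (interior S).Nonempty ∧
  (∀ x ∈ interior S, HasGradientAt f (f' x) x) ∧
  ∀ (u : ℕ → E d) (y : E d), (∀ n, u n ∈ interior S) → y ∈ frontier S →
    Tendsto u atTop (𝓝 y) → Tendsto (fun n => ‖f' (u n)‖) atTop atTop

def IsProperClosedConvexOn {d : ℕ} (f : E d → ℝ) (S : Set (E d)) : Prop :=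
  S.Nonempty ∧ ConvexOn ℝ S f ∧
  IsClosed {p : E d × ℝ | p.1 ∈ S ∧ f p.1 ≤ p.2}

def IsLegendre {d : ℕ} (f : E d → ℝ) (S : Set (E d)) (f' : E d → E d) : Prop :=
  IsProperClosedConvexOn f S ∧ IsEssentiallySmooth f S f' ∧
  StrictConvexOn ℝ (interior S) f

/-- The (classical) Bregman divergence `D_f(x, y) = f(x) - f(y) - ⟪∇f(y), x - y⟫`. -/
def Breg {d : ℕ} (f : E d → ℝ) (f' : E d → E d) (x y : E d) : ℝ :=
  f x - f y - ⟪f' y, x - y⟫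

/-- gradient inequality for convex functions -/
lemma grad_ineq {d : ℕ} {φ : E d → ℝ} {S : Set (E d)} (hφ : ConvexOn ℝ S φ)
    {x y : E d} (hx : x ∈ S) (hy : y ∈ S) {g : E d} (hg : HasGradientAt φ g x) :
    φ x + ⟪g, y - x⟫ ≤ φ y := by
  set A := AffineMap.lineMap (k := ℝ) x y with hA
  have hsub : Set.Icc (0:ℝ) 1 ⊆ A ⁻¹' S := by
    intro t ht
    have : A t ∈ segment ℝ x y := by
      rw [segment_eq_image_lineMap]; exact Set.mem_image_of_mem _ ht
    exact hφ.1.segment_subset hx hy this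
  have hψ : ConvexOn ℝ (Set.Icc (0:ℝ) 1) (φ ∘ A) :=
    (hφ.comp_affineMap A).subset hsub (convex_Icc 0 1)
  have hline : HasDerivAt A (y - x) 0 := AffineMap.hasDerivAt_lineMap
  have hder : HasDerivAt (φ ∘ A) ⟪g, y - x⟫ 0 := by
    have h0 : A 0 = x := AffineMap.lineMap_apply_zero x y
    have := (h0 ▸ hg.hasFDerivAt).comp_hasDerivAt 0 hline
    simpa [InnerProductSpace.toDual_apply_apply] using this
  have := hψ.le_slope_of_hasDerivAt (Set.left_mem_Icc.2 zero_le_one)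
    (Set.right_mem_Icc.2 zero_le_one) zero_lt_one hder
  have h1 : (φ ∘ A) 1 = φ y := by simp [hA]
  have h0 : (φ ∘ A) 0 = φ x := by simp [hA]
  rw [slope_def_field] at this
  simp only [h0, h1, div_one, sub_zero] at this
  linarith

/-- k is bounded below on the unit sphere by k 0 + c for some c > 0 -/
lemma sphere_gap {d : ℕ} {k : E d → ℝ} {Sk : Set (E d)}
    (hcl : IsClosed {p : E d × ℝ | p.1 ∈ Sk ∧ k p.1 ≤ p.2})
    (hk0min : ∀ y ∈ Sk, y ≠ 0 → k 0 < k y) :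
    ∃ c > 0, ∀ z ∈ Sk, ‖z‖ = 1 → k 0 + c ≤ k z := by
  by_contra h
  push_neg at h
  have h' : ∀ n : ℕ, ∃ z ∈ Sk, ‖z‖ = 1 ∧ k z < k 0 + 1 / (n + 1) := by
    intro n
    obtain ⟨z, hz1, hz2, hz3⟩ := h (1 / (n + 1 : ℝ)) (by positivity)
    exact ⟨z, hz1, hz2, by linarith⟩
  choose z hz1 hz2 hz3 using h'
  have hzs : ∀ n, z n ∈ Metric.sphere (0 : E d) 1 := by
    intro n; rw [mem_sphere_zero_iff_norm]; exact hz2 n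
  obtain ⟨a, ha, φ, hφ, hconv⟩ := (isCompact_sphere (0 : E d) 1).tendsto_subseq hzs
  have hmem : ∀ n, (z (φ n), k 0 + 1 / ((φ n : ℝ) + 1)) ∈
      {p : E d × ℝ | p.1 ∈ Sk ∧ k p.1 ≤ p.2} := fun n => ⟨hz1 _, (hz3 _).le⟩
  have htend : Tendsto (fun n => (z (φ n), k 0 + 1 / ((φ n : ℝ) + 1))) atTop
      (𝓝 (a, k 0)) := by
    refine Tendsto.prodMk_nhds hconv ?_
    have h2 : Tendsto (fun n : ℕ => 1 / ((n : ℝ) + 1)) atTop (𝓝 0) :=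
      tendsto_one_div_add_atTop_nhds_zero_nat
    have := (h2.comp hφ.tendsto_atTop).const_add (k 0)
    simpa using this
  have hlim : a ∈ Sk ∧ k a ≤ k 0 :=
    hcl.mem_of_tendsto htend (Filter.Eventually.of_forall hmem)
  have hna : ‖a‖ = 1 := mem_sphere_zero_iff_norm.1 ha
  have hane : a ≠ 0 := by intro h0; rw [h0, norm_zero] at hna; norm_num at hna
  have := hk0min a hlim.1 hane
  linarith [hlim.2]

/-- coercivity of k on Sk -/
lemma k_coercive {d : ℕ} {k : E d → ℝ} {Sk : Set (E d)} (hconv : ConvexOn ℝ Sk k)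
    (hk0 : (0 : E d) ∈ Sk) {c : ℝ} (hc : 0 < c)
    (hsph : ∀ z ∈ Sk, ‖z‖ = 1 → k 0 + c ≤ k z)
    {y : E d} (hy : y ∈ Sk) (hny : 1 < ‖y‖) : k 0 + c * ‖y‖ ≤ k y := by
  set b := ‖y‖⁻¹ with hbdef
  have hn0 : (0:ℝ) < ‖y‖ := by linarith
  have hb0 : 0 < b := by positivity
  have hb1 : b ≤ 1 := by
    rw [hbdef]; rw [inv_le_one_iff₀]; right; linarith
  have hbn : b * ‖y‖ = 1 := inv_mul_cancel₀ hn0.ne'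
  have hzmem : (1 - b) • (0 : E d) + b • y ∈ Sk :=
    hconv.1 hk0 hy (by linarith) hb0.le (by ring)
  have hzmem' : b • y ∈ Sk := by simpa using hzmem
  have hzn : ‖b • y‖ = 1 := by
    rw [norm_smul, Real.norm_eq_abs, abs_of_pos hb0]; exact hbn
  have hineq := hconv.2 hk0 hy (by linarith : (0:ℝ) ≤ 1 - b) hb0.le (by ring)
  simp only [smul_zero, zero_add, smul_eq_mul] at hineq
  have hlow := hsph _ hzmem' hzn
  nlinarith [mul_le_mul_of_nonneg_left hineq hn0.le,
    mul_le_mul_of_nonneg_left hlow hn0.le]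

lemma arith1 (A B Z a b F0 F1 N s L c : ℝ) (hL : 0 < L) (hs0 : 0 < s) (hs1 : s ≤ 1)
    (hc : 0 < c)
    (h1 : A - B - (a - b) ≤ L * (F0 - F1 - s / L * a))
    (h2 : F0 + -(s / L * b) ≤ F1)
    (h3 : B + (a - b) ≤ A)
    (h4 : Z + c * N ≤ A)
    (hy2 : (B - Z) / c < N) : False := by
  have q1 : L * (F0 - F1 - s / L * a) = L * F0 - L * F1 - s * a := by field_simp
  rw [q1] at h1
  have q2 : L * F0 - L * F1 ≤ s * b := by
    have h2' := mul_le_mul_of_nonneg_left h2 hL.le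
    have e : L * (F0 + -(s / L * b)) = L * F0 - s * b := by field_simp; ring
    rw [e] at h2'
    linarith
  have h5 : A ≤ B + a - b + s * b - s * a := by linarith
  have h6 := mul_le_mul_of_nonneg_left h3 (by linarith : (0:ℝ) ≤ 1 - s)
  have h7 := mul_le_mul_of_nonneg_left h4 hs0.le
  have h8 : s * (Z + c * N) ≤ s * B := by nlinarith [h5, h6, h7]
  have h9 : Z + c * N ≤ B := le_of_mul_le_mul_left h8 hs0
  have h10 : B - Z < c * N := by
    have hh := (div_lt_iff₀ hc).1 hy2
    have := mul_comm N c
    linarith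
  linarith

/-- one step of the iteration stays in the interior -/
lemma step_mem {d : ℕ} (f k : E d → ℝ) (Sf Sk : Set (E d)) (f' k' : E d → E d)
    (hfpc : IsProperClosedConvexOn f Sf) (hfes : IsEssentiallySmooth f Sf f')
    (hk : IsLegendre k Sk k')
    (hk0 : (0 : E d) ∈ Sk) (hk0min : ∀ y ∈ Sk, y ≠ 0 → k 0 < k y)
    (L : ℝ) (hL : 0 < L)
    (hincl : ∀ x ∈ interior Sf, f' x ∈ interior Sk)
    (hrel : ∀ x ∈ interior Sf, ∀ y ∈ interior Sf,
      Breg k k' (f' y) (f' x) ≤ L * Breg f f' x y)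
    {x₀ : E d} (hx₀ : x₀ ∈ interior Sf) :
    x₀ - (1 / L) • k' (f' x₀) ∈ interior Sf := by
  by_contra hnot
  set g := f' x₀ with hgdef
  set v := k' g with hvdef
  set γ : ℝ → E d := fun t => x₀ - (t / L) • v with hγ
  have hγc : Continuous γ := by
    apply Continuous.sub continuous_const
    exact (continuous_id.div_const L).smul continuous_const
  have hγ0 : γ 0 = x₀ := by simp [hγ]
  set K : Set ℝ := Set.Icc 0 1 ∩ γ ⁻¹' (interior Sf)ᶜ with hK
  have hKc : IsClosed K := isClosed_Icc.inter (isOpen_interior.isClosed_compl.preimage hγc)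
  have hK1 : (1:ℝ) ∈ K := ⟨⟨zero_le_one, le_refl 1⟩, hnot⟩
  set T := sInf K with hT
  have hKne : K.Nonempty := ⟨1, hK1⟩
  have hKbdd : BddBelow K := ⟨0, fun t ht => ht.1.1⟩
  have hTK : T ∈ K := hKc.csInf_mem hKne hKbdd
  have hT1 : T ≤ 1 := hTK.1.2
  have hT0' : 0 ≤ T := hTK.1.1
  have hT0 : 0 < T := by
    rcases hT0'.lt_or_eq with h | h
    · exact h
    · exfalso; apply hTK.2; rw [← h, hγ0]; exact hx₀
  have hIco : ∀ t : ℝ, 0 ≤ t → t < T → γ t ∈ interior Sf := by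
    intro t h0 hlt
    by_contra hmem
    have hBB : BddBelow K := ⟨0, fun s hs => hs.1.1⟩
    exact absurd (csInf_le hBB ⟨⟨h0, hlt.le.trans hT1⟩, hmem⟩) (not_le.2 hlt)
  set t : ℕ → ℝ := fun n => T - T / (n + 2) with htdef
  have ht0 : ∀ n, 0 < t n := by
    intro n
    have hd : T / ((n:ℝ) + 2) < T :=
      div_lt_self hT0 (by linarith [Nat.cast_nonneg (α := ℝ) n])
    simp only [htdef]
    linarith
  have htlt : ∀ n, t n < T := by
    intro n
    have h2 : (0:ℝ) < (n:ℝ) + 2 := by positivity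
    have : (0:ℝ) < T / ((n:ℝ) + 2) := div_pos hT0 h2
    simp only [htdef]; linarith
  have htT : Tendsto t atTop (𝓝 T) := by
    have h2 : Tendsto (fun n : ℕ => T / ((n:ℝ) + 2)) atTop (𝓝 0) := by
      apply Tendsto.div_atTop tendsto_const_nhds
      exact tendsto_atTop_add_const_right atTop 2 tendsto_natCast_atTop_atTop
    have hconst : Tendsto (fun _ : ℕ => T) atTop (𝓝 T) := tendsto_const_nhds
    have := hconst.sub h2
    simpa using this
  have hu : ∀ n, γ (t n) ∈ interior Sf := fun n => hIco (t n) (ht0 n).le (htlt n)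
  have hγtT : Tendsto (fun n => γ (t n)) atTop (𝓝 (γ T)) := (hγc.tendsto T).comp htT
  have hfr : γ T ∈ frontier Sf := by
    constructor
    · exact mem_closure_of_tendsto hγtT
        (Filter.Eventually.of_forall fun n => interior_subset (hu n))
    · exact hTK.2
  have hblow := hfes.2.2 (fun n => γ (t n)) (γ T) hu hfr hγtT
  obtain ⟨c, hc, hsph⟩ := sphere_gap hk.1.2.2 hk0min
  have hgSk : g ∈ interior Sk := hincl x₀ hx₀
  have hgk : HasGradientAt k v g := hk.2.1.2.1 g hgSk
  have hgf : HasGradientAt f g x₀ := hfes.2.1 x₀ hx₀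
  set M : ℝ := max 1 ((k g - k 0) / c) with hM
  have key : ∀ n, ‖f' (γ (t n))‖ ≤ M := by
    intro n
    by_contra hbig
    push_neg at hbig
    have hy1 : 1 < ‖f' (γ (t n))‖ := (le_max_left _ _).trans_lt hbig
    have hy2 : (k g - k 0) / c < ‖f' (γ (t n))‖ := (le_max_right _ _).trans_lt hbig
    set y := f' (γ (t n)) with hydef
    set s := t n with hsdef
    have hs0 : 0 < s := ht0 n
    have hs1 : s ≤ 1 := (htlt n).le.trans hT1
    have hySk : y ∈ Sk := interior_subset (hincl _ (hu n))
    have h1 := hrel x₀ hx₀ (γ (t n)) (hu n)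
    simp only [Breg, ← hgdef, ← hvdef, ← hydef] at h1
    have hsub1 : x₀ - γ (t n) = (s / L) • v := by
      simp only [hγ]; rw [sub_sub_cancel]
    have hsub2 : γ (t n) - x₀ = -((s / L) • v) := by
      simp only [hγ]; abel
    rw [hsub1, real_inner_smul_right, inner_sub_right] at h1
    have h2 := grad_ineq hfpc.2.1 (interior_subset hx₀) (interior_subset (hu n)) hgf
    rw [hsub2, inner_neg_right, real_inner_smul_right] at h2
    have h3 := grad_ineq hk.1.2.1 (interior_subset hgSk) hySk hgk
    rw [inner_sub_right] at h3
    have h4 := k_coercive hk.1.2.1 hk0 hc hsph hySk hy1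
    -- pass to real arithmetic
    have ecomm : ⟪y, v⟫ = ⟪v, y⟫ := real_inner_comm _ _
    have ecomm2 : ⟪g, v⟫ = ⟪v, g⟫ := real_inner_comm _ _
    rw [ecomm] at h1
    rw [ecomm2] at h2
    exact arith1 (k y) (k g) (k 0) ⟪v, y⟫ ⟪v, g⟫ (f x₀) (f (γ (t n))) ‖y‖ s L c
      hL hs0 hs1 hc h1 h2 h3 h4 hy2
  obtain ⟨n, hn⟩ := (hblow.eventually_gt_atTop M).exists
  exact absurd (key n) (not_le.2 hn)

/-- descent lemma: under the standing assumptions (f essentially smooth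
convex; k Legendre convex, uniquely minimized at 0; ∇f(int dom f) ⊆ int dom k; dual relative
smoothness inequality), the iterates `x_{i+1} = x_i - (1/L*)·∇k(∇f(x_i))` stay in
`int(dom f)` and satisfy the descent inequality. -/
theorem stmt13 {d : ℕ} (f k : E d → ℝ) (Sf Sk : Set (E d)) (f' k' : E d → E d)
    (hfpc : IsProperClosedConvexOn f Sf) (hfes : IsEssentiallySmooth f Sf f')
    (hk : IsLegendre k Sk k')
    (hk0 : (0 : E d) ∈ Sk) (hk0min : ∀ y ∈ Sk, y ≠ 0 → k 0 < k y)
    (L : ℝ) (hL : 0 < L)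
    (hincl : ∀ x ∈ interior Sf, f' x ∈ interior Sk)
    (hrel : ∀ x ∈ interior Sf, ∀ y ∈ interior Sf,
      Breg k k' (f' y) (f' x) ≤ L * Breg f f' x y)
    (x : ℕ → E d) (hx0 : x 0 ∈ interior Sf)
    (hiter : ∀ i : ℕ, x (i + 1) = x i - (1 / L) • k' (f' (x i))) :
    (∀ i : ℕ, x i ∈ interior Sf) ∧
    ∀ i : ℕ, ∀ w ∈ interior Sf,
      k (f' (x (i + 1))) ≤
        k (f' w) - Breg k k' (f' w) (f' (x i))
          + L * Breg f f' (x i) w - L * Breg f f' (x (i + 1)) w := by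
  have hmem : ∀ i : ℕ, x i ∈ interior Sf := by
    intro i
    induction i with
    | zero => exact hx0
    | succ n ih =>
      rw [hiter n]
      exact step_mem f k Sf Sk f' k' hfpc hfes hk hk0 hk0min L hL hincl hrel ih
  refine ⟨hmem, ?_⟩
  intro i w hw
  have h1 := hrel (x i) (hmem i) (x (i + 1)) (hmem (i + 1))
  set v := k' (f' (x i)) with hvdef
  have hxd : x i - x (i + 1) = (1 / L) • v := by rw [hiter i]; exact (sub_sub_cancel _ _)
  have e1 : ⟪f' w, x i - w⟫ - ⟪f' w, x (i+1) - w⟫ = (1/L) * ⟪f' w, v⟫ := by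
    rw [← inner_sub_right]
    have : (x i - w) - (x (i+1) - w) = x i - x (i+1) := by abel
    rw [this, hxd, real_inner_smul_right]
  have e2 : ⟪f' (x (i+1)), x i - x (i+1)⟫ = (1/L) * ⟪f' (x (i+1)), v⟫ := by
    rw [hxd, real_inner_smul_right]
  have e3 : ⟪v, f' w - f' (x i)⟫ = ⟪f' w, v⟫ - ⟪v, f' (x i)⟫ := by
    rw [inner_sub_right, real_inner_comm v (f' w)]
  have e4 : ⟪v, f' (x (i+1)) - f' (x i)⟫ = ⟪f' (x (i+1)), v⟫ - ⟪v, f' (x i)⟫ := by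
    rw [inner_sub_right, real_inner_comm v (f' (x (i+1)))]
  simp only [Breg, ← hvdef] at h1 ⊢
  rw [e2, e4] at h1
  rw [e3]
  have q1 : L * (f (x i) - f (x (i+1)) - 1/L * ⟪f' (x (i+1)), v⟫)
      = L * f (x i) - L * f (x (i+1)) - ⟪f' (x (i+1)), v⟫ := by field_simp
  have q3 : L * (⟪f' w, x i - w⟫ - ⟪f' w, x (i+1) - w⟫) = ⟪f' w, v⟫ := by
    rw [e1]; field_simp
  have q4 : k (f' w) - (k (f' w) - k (f' (x i)) - (⟪f' w, v⟫ - ⟪v, f' (x i)⟫))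
        + L * (f (x i) - f w - ⟪f' w, x i - w⟫)
        - L * (f (x (i+1)) - f w - ⟪f' w, x (i+1) - w⟫)
      = k (f' (x i)) - ⟪v, f' (x i)⟫ + (L * f (x i) - L * f (x (i+1)))
        + ⟪f' w, v⟫ - L * (⟪f' w, x i - w⟫ - ⟪f' w, x (i+1) - w⟫) := by ring
  rw [q4, q3]
  rw [q1] at h1
  linarith
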